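/- For the discretized truncated exponential horizon of the previous statements, the transition probabilities q_t from the recurrence q_2 = p_2, q_t = p_t / ∏_{k=2}^{t-1}(1−q_k) satisfy the closed form q_{t} = (e^{−λ(t−3/2)} − e^{−λ(t−1/2)}) / (e^{−λ(t−3/2)} − e^{−λ(T_max−1/2)}) for t = 2,...,T_max; in particular q_{T_max} = 1. -/

import Mathlib

/-! The horizon has the (unnormalised) survival function
`S t = e^{-λ(t-3/2)} - e^{-λ(T_max-1/2)}`, with `p t = (S t - S (t+1)) / S 2`.
The recurrence defines the hazard rates of `p`, and by induction
`∏_{k<t} (1 - q k)` telescopes to `S t / S 2`, so `q t = (S t - S (t+1)) / S t`.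
Since `S (T_max + 1) = 0`, this gives `q T_max = 1`. -/

open Finset Real

section Hazard

variable {S p q : ℕ → ℝ} {m T : ℕ}

theorem prod_Ico_one_sub_hazard (hS : ∀ k, m ≤ k → k ≤ T → S k ≠ 0)
    (hq : ∀ k, m ≤ k → k < T → q k = (S k - S (k + 1)) / S k) (hmT : m ≤ T) :
    ∏ k ∈ Ico m T, (1 - q k) = S T / S m := by
  induction T, hmT using Nat.le_induction with
  | base => simp [div_self (hS m le_rfl le_rfl)]
  | succ n hmn ih =>
    have hSn := hS n hmn n.le_succ
    have hSm := hS m le_rfl (hmn.trans n.le_succ)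
    rw [prod_Ico_succ_top hmn, ih (fun k hk hkn => hS k hk (hkn.trans n.le_succ))
      (fun k hk hkn => hq k hk (hkn.trans n.lt_succ_self)), hq n hmn n.lt_succ_self]
    field_simp
    ring

theorem hazard_eq_of_survival (hS : ∀ k, m ≤ k → k ≤ T → S k ≠ 0)
    (hp : ∀ t, m ≤ t → t ≤ T → p t = (S t - S (t + 1)) / S m)
    (hq : ∀ t, m ≤ t → t ≤ T → q t = p t / ∏ k ∈ Ico m t, (1 - q k)) :
    ∀ t, m ≤ t → t ≤ T → q t = (S t - S (t + 1)) / S t := by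
  intro t
  induction t using Nat.strong_induction_on with
  | _ t ih =>
    intro hmt htT
    have hprod : ∏ k ∈ Ico m t, (1 - q k) = S t / S m :=
      prod_Ico_one_sub_hazard (fun k hk hkt => hS k hk (hkt.trans htT))
        (fun k hk hkt => ih k hkt hk (hkt.le.trans htT)) hmt
    have hSm := hS m le_rfl (hmt.trans htT)
    have hSt := hS t hmt htT
    rw [hq t hmt htT, hprod, hp t hmt htT]
    field_simp

end Hazard

noncomputable def truncExpSurvival (lam : ℝ) (Tmax t : ℕ) : ℝ :=
  exp (-lam * ((t : ℝ) - 3 / 2)) - exp (-lam * ((Tmax : ℝ) - 1 / 2))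

theorem truncExpSurvival_pos {lam : ℝ} (hlam : 0 < lam) {Tmax t : ℕ} (ht : t ≤ Tmax) :
    0 < truncExpSurvival lam Tmax t := by
  have htT : (t : ℝ) ≤ Tmax := by exact_mod_cast ht
  rw [truncExpSurvival, sub_pos, exp_lt_exp]
  nlinarith

theorem truncExpSurvival_two (lam : ℝ) (Tmax : ℕ) :
    truncExpSurvival lam Tmax 2 = exp (-lam / 2) - exp (-lam * ((Tmax : ℝ) - 1 / 2)) := by
  rw [truncExpSurvival]
  norm_num
  ring_nf

theorem truncExpSurvival_sub_succ (lam : ℝ) (Tmax t : ℕ) :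
    truncExpSurvival lam Tmax t - truncExpSurvival lam Tmax (t + 1) =
      exp (-lam * ((t : ℝ) - 3 / 2)) - exp (-lam * ((t : ℝ) - 1 / 2)) := by
  rw [truncExpSurvival, truncExpSurvival]
  push_cast
  ring_nf

theorem truncExpSurvival_succ_self (lam : ℝ) (Tmax : ℕ) :
    truncExpSurvival lam Tmax (Tmax + 1) = 0 := by
  rw [truncExpSurvival, sub_eq_zero]
  push_cast
  ring_nf

/-- For the discretized truncated exponential horizon, with
`p t = (e^{-λ(t-3/2)} - e^{-λ(t-1/2)}) / (e^{-λ/2} - e^{-λ(T_max-1/2)})` and the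
recurrence `q 2 = p 2`, `q t = p t / ∏_{k=2}^{t-1}(1 - q k)`, one has the closed
form `q t = (e^{-λ(t-3/2)} - e^{-λ(t-1/2)}) / (e^{-λ(t-3/2)} - e^{-λ(T_max-1/2)})`
for `t = 2,...,T_max`, and in particular `q T_max = 1`. -/
theorem stmt9 (lam : ℝ) (hlam : 0 < lam) (Tmax : ℕ) (hTmax : 2 ≤ Tmax)
    (p q : ℕ → ℝ)
    (hp : ∀ t : ℕ, 2 ≤ t → t ≤ Tmax →
      p t = (Real.exp (-lam * ((t : ℝ) - 3 / 2)) - Real.exp (-lam * ((t : ℝ) - 1 / 2))) /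
        (Real.exp (-lam / 2) - Real.exp (-lam * ((Tmax : ℝ) - 1 / 2))))
    (hq2 : q 2 = p 2)
    (hqt : ∀ t : ℕ, 3 ≤ t → t ≤ Tmax →
      q t = p t / ∏ k ∈ Finset.Icc 2 (t - 1), (1 - q k)) :
    (∀ t : ℕ, 2 ≤ t → t ≤ Tmax →
      q t = (Real.exp (-lam * ((t : ℝ) - 3 / 2)) - Real.exp (-lam * ((t : ℝ) - 1 / 2))) /
        (Real.exp (-lam * ((t : ℝ) - 3 / 2)) - Real.exp (-lam * ((Tmax : ℝ) - 1 / 2)))) ∧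
    q Tmax = 1 := by
  have hS : ∀ k, 2 ≤ k → k ≤ Tmax → truncExpSurvival lam Tmax k ≠ 0 :=
    fun _ _ hk => (truncExpSurvival_pos hlam hk).ne'
  have hpS : ∀ t, 2 ≤ t → t ≤ Tmax → p t =
      (truncExpSurvival lam Tmax t - truncExpSurvival lam Tmax (t + 1)) /
        truncExpSurvival lam Tmax 2 := fun t h2t htT => by
    rw [hp t h2t htT, truncExpSurvival_sub_succ, truncExpSurvival_two]
  have hqS : ∀ t, 2 ≤ t → t ≤ Tmax → q t = p t / ∏ k ∈ Ico 2 t, (1 - q k) := by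
    intro t h2t htT
    rcases h2t.eq_or_lt with rfl | h3t
    · simp [hq2]
    · have hIcc : Icc 2 (t - 1) = Ico 2 t := by ext k; simp only [mem_Icc, mem_Ico]; omega
      rw [hqt t h3t htT, hIcc]
  have hazard := hazard_eq_of_survival hS hpS hqS
  refine ⟨fun t h2t htT => ?_, ?_⟩
  · rw [hazard t h2t htT, truncExpSurvival_sub_succ]
    rfl
  · rw [hazard Tmax hTmax le_rfl, truncExpSurvival_succ_self, sub_zero,
      div_self (hS _ hTmax le_rfl)]
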